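/- For every ε ∈ (0,1) there exists a constant C > 0, depending only on ε, such that for all θ ∈ (0,π) and all λ = α + i t ∈ ℂ with 1 − (1−ε)π/θ ≤ α ≤ (1−ε)π/θ − 1 and |t|·θ ≥ 1, one has ( |λ| + |λ|^{−1} ) · ∫₀^θ |sin((λ+1)φ)/(4λ sin((λ+1)θ)) − sin((λ−1)φ)/(4λ sin((λ−1)θ))|² dφ ≤ C / |λ|⁴. -/

import Mathlib

/-!
Over the common denominator `4λ sin((λ+1)θ) sin((λ-1)θ)` the addition theorems turn the numerator
into `sin(λ(φ+θ)) sin(φ-θ) - sin(λ(φ-θ)) sin(φ+θ)`. With `a = |Im λ|`, the bound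
`|sin z| ≤ e^{|Im z|}` controls it by `e^{a(θ+φ)}(θ-φ) + e^{a(θ-φ)}(θ+φ)`, while
`|sin z| ≥ sinh |Im z| ≥ e^{|Im z|}/4` (this is where `aθ ≥ 1` enters) bounds the denominator
below by `|λ| e^{2aθ}/4`. Since `s e^{-s} ≤ 2 e^{-s/2}`, this gives
`a |∂G| ≤ 8 (e^{-a(θ-φ)/2} + e^{-a(θ+φ)/2}) / |λ|`, whose square integrates to `O(1/(a³|λ|²))`.
Finally `|Re λ| ≤ π/θ ≤ πa`, so `|λ| ≤ (1+π) a`, and `|λ| ≥ a ≥ 1/θ > 1/π` absorbs `|λ|⁻¹`.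
-/

open Real MeasureTheory

namespace Real

theorem exp_div_four_le_sinh {y : ℝ} (hy : 1 / 2 ≤ y) : exp y / 4 ≤ sinh y := by
  have h : 2 ≤ exp (2 * y) := by linarith [add_one_le_exp (2 * y)]
  have : exp (-y) * 2 ≤ exp y := by
    calc exp (-y) * 2 ≤ exp (-y) * exp (2 * y) := by gcongr
      _ = exp y := by rw [← exp_add]; ring_nf
  rw [sinh_eq]
  linarith

theorem mul_exp_neg_le (x : ℝ) : x * exp (-x) ≤ 2 * exp (-(x / 2)) := by
  have h : x ≤ 2 * exp (x / 2) := by linarith [add_one_le_exp (x / 2), exp_pos (x / 2)]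
  calc x * exp (-x) ≤ 2 * exp (x / 2) * exp (-x) := by gcongr
    _ = 2 * exp (-(x / 2)) := by rw [mul_assoc, ← exp_add]; ring_nf

theorem integral_exp_neg_mul_sub_add_exp_neg_mul_add_le {a : ℝ} (ha : 0 < a) (θ : ℝ) :
    ∫ φ in (0 : ℝ)..θ, (exp (-(a * (θ - φ))) + exp (-(a * (θ + φ)))) ≤ 1 / a := by
  have hderiv : ∀ φ ∈ Set.uIcc 0 θ, HasDerivAt
      (fun φ => (exp (-(a * (θ - φ))) - exp (-(a * (θ + φ)))) / a)
      (exp (-(a * (θ - φ))) + exp (-(a * (θ + φ)))) φ := by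
    intro φ _
    refine (((((hasDerivAt_id' φ).const_sub θ).const_mul a).fun_neg.exp).fun_sub
      ((((hasDerivAt_id' φ).const_add θ).const_mul a).fun_neg.exp)).div_const a
      |>.congr_deriv ?_
    field_simp
    ring
  rw [intervalIntegral.integral_eq_sub_of_hasDerivAt hderiv
    ((by fun_prop : Continuous _).intervalIntegrable _ _)]
  simp only [sub_self, mul_zero, neg_zero, exp_zero, add_zero, sub_zero, zero_div]
  gcongr
  linarith [exp_pos (-(a * (θ + θ)))]

end Real

namespace Complex

theorem sin_mul_sin_sub_sin_mul_sin (l p t : ℂ) :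
    sin ((l + 1) * p) * sin ((l - 1) * t) - sin ((l - 1) * p) * sin ((l + 1) * t)
      = sin (l * (p + t)) * sin (p - t) - sin (l * (p - t)) * sin (p + t) := by
  simp only [add_mul, sub_mul, mul_add, mul_sub, one_mul, sin_add, sin_sub]
  ring

theorem sq_norm_sin (z : ℂ) : ‖sin z‖ ^ 2 = Real.sin z.re ^ 2 + Real.sinh z.im ^ 2 := by
  rw [sin_eq, ← ofReal_sin, ← ofReal_cosh, ← ofReal_cos, ← ofReal_sinh, ← ofReal_mul,
    ← ofReal_mul, norm_add_mul_I, sq_sqrt (by positivity), mul_pow, mul_pow, Real.cosh_sq]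
  linear_combination Real.sinh z.im ^ 2 * Real.sin_sq_add_cos_sq z.re

theorem norm_sin_le_exp_abs_im (z : ℂ) : ‖sin z‖ ≤ Real.exp |z.im| := by
  have hcosh : Real.cosh |z.im| ≤ Real.exp |z.im| := by
    rw [← Real.exp_sub_sinh]
    linarith [Real.sinh_nonneg_iff.2 (abs_nonneg z.im)]
  refine le_trans ?_ hcosh
  refine (pow_le_pow_iff_left₀ (norm_nonneg _) (Real.cosh_pos _).le two_ne_zero).1 ?_
  rw [sq_norm_sin, Real.cosh_abs, Real.cosh_sq']
  nlinarith [Real.sin_sq_le_one z.re]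

theorem sinh_abs_im_le_norm_sin (z : ℂ) : Real.sinh |z.im| ≤ ‖sin z‖ := by
  rw [← Real.abs_sinh]
  refine abs_le_of_sq_le_sq' ?_ (norm_nonneg _) |>.2
  rw [sq_norm_sin, sq_abs]
  nlinarith [sq_nonneg (Real.sin z.re)]

theorem norm_sin_ofReal_le (x : ℝ) : ‖sin (x : ℂ)‖ ≤ |x| := by
  rw [← ofReal_sin, norm_real, Real.norm_eq_abs]
  exact Real.abs_sin_le_abs

theorem norm_sin_mul_ofReal_le (w : ℂ) (x : ℝ) : ‖sin (w * x)‖ ≤ Real.exp (|w.im| * |x|) := by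
  simpa only [im_mul_ofReal, abs_mul] using norm_sin_le_exp_abs_im (w * x)

theorem exp_abs_im_div_four_le_norm_sin {z : ℂ} (hz : 1 / 2 ≤ |z.im|) :
    Real.exp |z.im| / 4 ≤ ‖sin z‖ :=
  (Real.exp_div_four_le_sinh hz).trans (sinh_abs_im_le_norm_sin z)

theorem exp_abs_im_mul_div_four_le_norm_sin_mul {w : ℂ} {x : ℝ} (hx : 0 ≤ x)
    (h : 1 / 2 ≤ |w.im| * x) : Real.exp (|w.im| * x) / 4 ≤ ‖sin (w * x)‖ := by
  have him : |(w * x).im| = |w.im| * x := by rw [im_mul_ofReal, abs_mul, abs_of_nonneg hx]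
  exact him ▸ exp_abs_im_div_four_le_norm_sin (him ▸ h)

theorem norm_le_one_add_mul_abs_im {z : ℂ} {c θ : ℝ} (hc : 0 ≤ c)
    (hre : |z.re| ≤ c / θ) (him : 1 ≤ |z.im| * θ) : ‖z‖ ≤ (1 + c) * |z.im| := by
  have hθ : 0 < θ := pos_of_mul_pos_right (one_pos.trans_le him) (abs_nonneg _)
  have : c / θ ≤ c * |z.im| := by
    rw [div_le_iff₀ hθ]; nlinarith
  linarith [z.norm_le_abs_re_add_abs_im]

end Complex

noncomputable def greenBoundaryDeriv (lam : ℂ) (θ φ : ℝ) : ℂ :=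
  Complex.sin ((lam + 1) * φ) / (4 * lam * Complex.sin ((lam + 1) * θ))
    - Complex.sin ((lam - 1) * φ) / (4 * lam * Complex.sin ((lam - 1) * θ))

theorem norm_sin_mul_sin_sub_sin_mul_sin_le (lam : ℂ) {θ φ : ℝ} (hφ : φ ∈ Set.Icc 0 θ) :
    ‖Complex.sin (lam * ↑(φ + θ)) * Complex.sin ↑(φ - θ)
        - Complex.sin (lam * ↑(φ - θ)) * Complex.sin ↑(φ + θ)‖
      ≤ exp (|lam.im| * (θ + φ)) * (θ - φ) + exp (|lam.im| * (θ - φ)) * (θ + φ) := by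
  have hadd : |φ + θ| = θ + φ := by rw [abs_of_nonneg (by linarith [hφ.1, hφ.2]), add_comm]
  have hsub : |φ - θ| = θ - φ := by rw [abs_of_nonpos (by linarith [hφ.2]), neg_sub]
  refine (norm_sub_le _ _).trans ?_
  rw [norm_mul, norm_mul]
  gcongr
  · exact (Complex.norm_sin_mul_ofReal_le _ _).trans_eq (by rw [hadd])
  · exact (Complex.norm_sin_ofReal_le _).trans_eq hsub
  · exact (Complex.norm_sin_mul_ofReal_le _ _).trans_eq (by rw [hsub])
  · exact (Complex.norm_sin_ofReal_le _).trans_eq (hadd ▸ rfl)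

theorem greenBoundaryDeriv_eq {lam : ℂ} {θ : ℝ} (hlam : lam ≠ 0)
    (h₁ : Complex.sin ((lam + 1) * θ) ≠ 0) (h₂ : Complex.sin ((lam - 1) * θ) ≠ 0) (φ : ℝ) :
    greenBoundaryDeriv lam θ φ
      = (Complex.sin (lam * ↑(φ + θ)) * Complex.sin ↑(φ - θ)
          - Complex.sin (lam * ↑(φ - θ)) * Complex.sin ↑(φ + θ))
        / (4 * lam * Complex.sin ((lam + 1) * θ) * Complex.sin ((lam - 1) * θ)) := by
  have h4 : (4 : ℂ) * lam ≠ 0 := mul_ne_zero (by norm_num) hlam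
  push_cast
  rw [← Complex.sin_mul_sin_sub_sin_mul_sin, greenBoundaryDeriv, div_sub_div _ _ (mul_ne_zero h4 h₁)
    (mul_ne_zero h4 h₂), div_eq_div_iff (by simp [*]) (by simp [*])]
  ring

theorem norm_greenBoundaryDeriv_le {lam : ℂ} {θ φ : ℝ} (hθ : 1 ≤ |lam.im| * θ)
    (hφ : φ ∈ Set.Icc 0 θ) :
    ‖greenBoundaryDeriv lam θ φ‖ ≤ 4 * ((θ - φ) * exp (-(|lam.im| * (θ - φ)))
      + (θ + φ) * exp (-(|lam.im| * (θ + φ)))) / ‖lam‖ := by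
  set a := |lam.im|
  have hθ₀ : 0 < θ := pos_of_mul_pos_right (one_pos.trans_le hθ) (abs_nonneg _)
  have ha : 0 < a := pos_of_mul_pos_left (one_pos.trans_le hθ) hθ₀.le
  have hlam : 0 < ‖lam‖ := ha.trans_le (Complex.abs_im_le_norm lam)
  have h₁ : exp (a * θ) / 4 ≤ ‖Complex.sin ((lam + 1) * θ)‖ := by
    have := Complex.exp_abs_im_mul_div_four_le_norm_sin_mul (w := lam + 1) hθ₀.le
    simp only [Complex.add_im, Complex.one_im, add_zero] at this
    exact this (by linarith)
  have h₂ : exp (a * θ) / 4 ≤ ‖Complex.sin ((lam - 1) * θ)‖ := by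
    have := Complex.exp_abs_im_mul_div_four_le_norm_sin_mul (w := lam - 1) hθ₀.le
    simp only [Complex.sub_im, Complex.one_im, sub_zero] at this
    exact this (by linarith)
  have hden : ‖lam‖ * exp (a * θ) ^ 2 / 4
      ≤ ‖4 * lam * Complex.sin ((lam + 1) * θ) * Complex.sin ((lam - 1) * θ)‖ := by
    rw [norm_mul, norm_mul, norm_mul, RCLike.norm_ofNat]
    calc ‖lam‖ * exp (a * θ) ^ 2 / 4 = 4 * ‖lam‖ * (exp (a * θ) / 4) * (exp (a * θ) / 4) := by ring
      _ ≤ _ := by gcongr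
  have hexp : 0 < exp (a * θ) / 4 := by positivity
  rw [greenBoundaryDeriv_eq (norm_pos_iff.1 hlam) (norm_pos_iff.1 (hexp.trans_le h₁))
    (norm_pos_iff.1 (hexp.trans_le h₂)), norm_div]
  have hnum := norm_sin_mul_sin_sub_sin_mul_sin_le lam hφ
  refine (div_le_div₀ ((norm_nonneg _).trans hnum) hnum (by positivity) hden).trans_eq ?_
  have e₁ : exp (a * (θ + φ)) = exp (-(a * (θ - φ))) * exp (a * θ) ^ 2 := by
    rw [sq, ← exp_add, ← exp_add]; ring_nf
  have e₂ : exp (a * (θ - φ)) = exp (-(a * (θ + φ))) * exp (a * θ) ^ 2 := by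
    rw [sq, ← exp_add, ← exp_add]; ring_nf
  rw [e₁, e₂]
  field_simp

theorem sq_norm_greenBoundaryDeriv_le {lam : ℂ} {θ φ : ℝ} (hθ : 1 ≤ |lam.im| * θ)
    (hφ : φ ∈ Set.Icc 0 θ) :
    ‖greenBoundaryDeriv lam θ φ‖ ^ 2 ≤ 128 * (exp (-(|lam.im| * (θ - φ)))
      + exp (-(|lam.im| * (θ + φ)))) / (|lam.im| ^ 2 * ‖lam‖ ^ 2) := by
  set a := |lam.im|
  have ha : 0 < a := pos_of_mul_pos_left (one_pos.trans_le hθ) (by linarith [hφ.1, hφ.2])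
  have hlam : 0 < ‖lam‖ := ha.trans_le (Complex.abs_im_le_norm lam)
  set u := exp (-(a * (θ - φ) / 2))
  set v := exp (-(a * (θ + φ) / 2))
  have hG : a * ‖greenBoundaryDeriv lam θ φ‖ ≤ 8 * (u + v) / ‖lam‖ := by
    calc a * ‖greenBoundaryDeriv lam θ φ‖
        ≤ a * (4 * ((θ - φ) * exp (-(a * (θ - φ))) + (θ + φ) * exp (-(a * (θ + φ)))) / ‖lam‖) :=
          by gcongr; exact norm_greenBoundaryDeriv_le hθ hφ
      _ = 4 * (a * (θ - φ) * exp (-(a * (θ - φ))) + a * (θ + φ) * exp (-(a * (θ + φ))))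
            / ‖lam‖ := by ring
      _ ≤ 4 * (2 * u + 2 * v) / ‖lam‖ := by
          gcongr 4 * (?_ + ?_) / _ <;> exact mul_exp_neg_le _
      _ = 8 * (u + v) / ‖lam‖ := by ring
  have hu : u ^ 2 = exp (-(a * (θ - φ))) := by rw [← exp_nat_mul]; ring_nf
  have hv : v ^ 2 = exp (-(a * (θ + φ))) := by rw [← exp_nat_mul]; ring_nf
  rw [← hu, ← hv, le_div_iff₀ (by positivity)]
  calc ‖greenBoundaryDeriv lam θ φ‖ ^ 2 * (a ^ 2 * ‖lam‖ ^ 2)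
      = (a * ‖greenBoundaryDeriv lam θ φ‖ * ‖lam‖) ^ 2 := by ring
    _ ≤ (8 * (u + v)) ^ 2 := pow_le_pow_left₀ (by positivity) ((le_div_iff₀ hlam).1 hG) 2
    _ ≤ 128 * (u ^ 2 + v ^ 2) := by nlinarith [sq_nonneg (u - v)]

theorem integral_sq_norm_greenBoundaryDeriv_le {lam : ℂ} {θ : ℝ} (hθ : 1 ≤ |lam.im| * θ) :
    ∫ φ in (0 : ℝ)..θ, ‖greenBoundaryDeriv lam θ φ‖ ^ 2 ≤ 128 / (|lam.im| ^ 3 * ‖lam‖ ^ 2) := by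
  set a := |lam.im|
  have hθ₀ : 0 < θ := pos_of_mul_pos_right (one_pos.trans_le hθ) (abs_nonneg _)
  have ha : 0 < a := pos_of_mul_pos_left (one_pos.trans_le hθ) hθ₀.le
  have hlam : 0 < ‖lam‖ := ha.trans_le (Complex.abs_im_le_norm lam)
  calc ∫ φ in (0 : ℝ)..θ, ‖greenBoundaryDeriv lam θ φ‖ ^ 2
      ≤ ∫ φ in (0 : ℝ)..θ, 128 / (a ^ 2 * ‖lam‖ ^ 2)
          * (exp (-(a * (θ - φ))) + exp (-(a * (θ + φ)))) := by
        refine intervalIntegral.integral_mono_on hθ₀.le ?_ ?_ fun φ hφ => ?_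
        · exact (by unfold greenBoundaryDeriv; fun_prop : Continuous _).intervalIntegrable _ _
        · exact (by fun_prop : Continuous _).intervalIntegrable _ _
        · exact (sq_norm_greenBoundaryDeriv_le hθ hφ).trans_eq (by ring)
    _ ≤ 128 / (a ^ 2 * ‖lam‖ ^ 2) * (1 / a) := by
        rw [intervalIntegral.integral_const_mul]
        gcongr
        exact integral_exp_neg_mul_sub_add_exp_neg_mul_add_le ha θ
    _ = 128 / (a ^ 3 * ‖lam‖ ^ 2) := by field_simp

/-- Weighted `L²` decay in `|λ|` of the boundary derivative `∂_{φ'}G(λ,·,θ)` of the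
fourth-order Green's function, for `Re λ ∈ I_ε` and `|Im λ|θ ≥ 1`. -/
theorem green_boundary_L2_decay (ε : ℝ) (hε : ε ∈ Set.Ioo (0:ℝ) 1) :
    ∃ C : ℝ, 0 < C ∧ ∀ θ : ℝ, θ ∈ Set.Ioo (0:ℝ) π → ∀ lam : ℂ,
      1 - (1 - ε) * π / θ ≤ lam.re → lam.re ≤ (1 - ε) * π / θ - 1 →
      1 ≤ |lam.im| * θ →
      (‖lam‖ + (‖lam‖)⁻¹) *
        ∫ φ in (0:ℝ)..θ,
          (‖
            (Complex.sin ((lam + 1) * (φ : ℂ)) / (4 * lam * Complex.sin ((lam + 1) * θ))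
              - Complex.sin ((lam - 1) * (φ : ℂ))
                / (4 * lam * Complex.sin ((lam - 1) * θ)))‖)^2
        ≤ C / (‖lam‖)^4 := by
  refine ⟨128 * (1 + π ^ 2) * (1 + π) ^ 3, by positivity, fun θ hθ lam hre₁ hre₂ him => ?_⟩
  set a := |lam.im|
  set r := ‖lam‖
  have ha : 0 < a := pos_of_mul_pos_left (one_pos.trans_le him) hθ.1.le
  have hr : 0 < r := ha.trans_le (Complex.abs_im_le_norm lam)
  have hre : |lam.re| ≤ π / θ := by
    have : (1 - ε) * π / θ ≤ π / θ :=
      div_le_div_of_nonneg_right (by nlinarith [hε.1, pi_pos]) hθ.1.le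
    exact abs_le.2 ⟨by linarith, by linarith⟩
  have hra : r ≤ (1 + π) * a := Complex.norm_le_one_add_mul_abs_im pi_pos.le hre him
  have hπr : 1 ≤ π * r := by
    nlinarith [mul_le_mul_of_nonneg_left hθ.2.le ha.le, Complex.abs_im_le_norm lam, pi_pos]
  have hinv : r⁻¹ ≤ π ^ 2 * r := by
    rw [inv_le_iff_one_le_mul₀ hr]; nlinarith
  calc (r + r⁻¹) * ∫ φ in (0 : ℝ)..θ, ‖greenBoundaryDeriv lam θ φ‖ ^ 2
      ≤ (1 + π ^ 2) * r * (128 / (a ^ 3 * r ^ 2)) := by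
        refine mul_le_mul (by linarith) (integral_sq_norm_greenBoundaryDeriv_le him)
          (intervalIntegral.integral_nonneg hθ.1.le fun _ _ => by positivity) (by positivity)
    _ = 128 * (1 + π ^ 2) / (a ^ 3 * r) := by field_simp
    _ ≤ 128 * (1 + π ^ 2) * (1 + π) ^ 3 / r ^ 4 := by
        rw [div_le_div_iff₀ (by positivity) (by positivity)]
        have : r ^ 4 ≤ (1 + π) ^ 3 * (a ^ 3 * r) := by
          calc r ^ 4 = r ^ 3 * r := by ring
            _ ≤ ((1 + π) * a) ^ 3 * r := by gcongr
            _ = (1 + π) ^ 3 * (a ^ 3 * r) := by ring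
        nlinarith [this]
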